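/- arXiv:math/0305330 — 2 statements merged into one kernel-verified Lean document; each statement's English description precedes it below -/
import Mathlib

section
/- Let α₁,…,αₙ be real numbers with ∑ᵢ αᵢ = 0. Then for any real numbers h₁,…,hₙ, |∑ᵢ αᵢ hᵢ| ≤ (∑_{i : αᵢ>0} αᵢ) · (maxᵢ hᵢ − minᵢ hᵢ). -/
/-!
Since `∑ αᵢ = 0`, shifting `h` by a constant `m ≤ min h` does not change `∑ αᵢ hᵢ`, and after the
shift every term satisfies `αᵢ (hᵢ - m) ≤ αᵢ⁺ (max h - m)`: it is nonpositive when `αᵢ ≤ 0`.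
Summing bounds `∑ αᵢ hᵢ` above by `(∑ αᵢ⁺) (max h - min h)`, and the same bound for `-h`
bounds it below.
-/

open Finset

variable {ι R : Type*} [CommRing R] [LinearOrder R] [IsStrictOrderedRing R]

lemma mul_sub_le_ite_pos_mul_sub {a x m M : R} (hm : m ≤ x) (hM : x ≤ M) :
    a * (x - m) ≤ (if 0 < a then a else 0) * (M - m) := by
  split_ifs with ha
  · gcongr
  · rw [zero_mul]
    exact mul_nonpos_of_nonpos_of_nonneg (not_lt.mp ha) (sub_nonneg.mpr hm)

lemma sum_mul_le_sum_pos_mul_sub {s : Finset ι} {α h : ι → R} (hsum : ∑ i ∈ s, α i = 0)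
    {m M : R} (hm : ∀ i ∈ s, m ≤ h i) (hM : ∀ i ∈ s, h i ≤ M) :
    ∑ i ∈ s, α i * h i ≤ (∑ i ∈ s with 0 < α i, α i) * (M - m) := calc
  ∑ i ∈ s, α i * h i = ∑ i ∈ s, α i * (h i - m) := by
    simp only [mul_sub, sum_sub_distrib, ← sum_mul, hsum, zero_mul, sub_zero]
  _ ≤ ∑ i ∈ s, (if 0 < α i then α i else 0) * (M - m) :=
    sum_le_sum fun i hi => mul_sub_le_ite_pos_mul_sub (hm i hi) (hM i hi)
  _ = (∑ i ∈ s with 0 < α i, α i) * (M - m) := by rw [← sum_mul, sum_filter]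

lemma abs_sum_mul_le_sum_pos_mul_sub {s : Finset ι} {α h : ι → R} (hsum : ∑ i ∈ s, α i = 0)
    {m M : R} (hm : ∀ i ∈ s, m ≤ h i) (hM : ∀ i ∈ s, h i ≤ M) :
    |∑ i ∈ s, α i * h i| ≤ (∑ i ∈ s with 0 < α i, α i) * (M - m) := by
  refine abs_le'.mpr ⟨sum_mul_le_sum_pos_mul_sub hsum hm hM, ?_⟩
  have hneg := sum_mul_le_sum_pos_mul_sub (h := -h) hsum (m := -M) (M := -m)
    (fun i hi => neg_le_neg (hM i hi)) (fun i hi => neg_le_neg (hm i hi))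
  simpa [mul_neg, sum_neg_distrib, sub_neg_eq_add, neg_add_eq_sub] using hneg

theorem zero_sum_weighted_bound (n : ℕ) (hn : 0 < n) (α h : Fin n → ℝ)
    (hsum : ∑ i, α i = 0) :
    |∑ i, α i * h i| ≤
      (∑ i ∈ Finset.univ.filter (fun i => 0 < α i), α i) *
        ((Finset.univ.sup' (Finset.univ_nonempty_iff.mpr (Fin.pos_iff_nonempty.mp hn)) h) -
         (Finset.univ.inf' (Finset.univ_nonempty_iff.mpr (Fin.pos_iff_nonempty.mp hn)) h)) :=
  abs_sum_mul_le_sum_pos_mul_sub hsum (fun _ hi => inf'_le h hi) (fun _ hi => le_sup' h hi)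
end

section
/- Let C ≥ 1 and let p, q be probability vectors on a finite set 𝔍 with p(J) ≤ C·q(J) for all J, and let h : 𝔍 → [m, M]. Then |∑_J p(J)h(J) − ∑_J q(J)h(J)| ≤ (1 − 1/C)(M − m). -/
open Finset

theorem weighted_average_difference_bound_of_domination {J : Type*} [Fintype J]
    (C : ℝ) (hC : 1 ≤ C)
    (p q : J → ℝ) (hp : ∀ j, 0 ≤ p j) (hq : ∀ j, 0 ≤ q j)
    (hp1 : ∑ j, p j = 1) (hq1 : ∑ j, q j = 1)
    (hdom : ∀ j, p j ≤ C * q j)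
    (h : J → ℝ) (m M : ℝ) (hh : ∀ j, h j ∈ Set.Icc m M) :
    |(∑ j, p j * h j) - ∑ j, q j * h j| ≤ (1 - 1 / C) * (M - m) := by
  classical
  have hC0 : (0:ℝ) < C := lt_of_lt_of_le one_pos hC
  rcases isEmpty_or_nonempty J with hJ | ⟨⟨j0⟩⟩
  · simp at hp1
  have hmM : m ≤ M := le_trans (hh j0).1 (hh j0).2
  have hCinv : 0 ≤ 1 - 1 / C := by
    have : 1 / C ≤ 1 := by
      rw [div_le_one hC0]; exact hC
    linarith
  set S := Finset.univ.filter (fun j => q j < p j) with hSdef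
  have hsum0 : ∑ j, (p j - q j) = 0 := by
    rw [Finset.sum_sub_distrib, hp1, hq1]; ring
  have hdiff : (∑ j, p j * h j) - ∑ j, q j * h j = ∑ j, (p j - q j) * (h j - m) := by
    have e : ∑ j, (p j - q j) * (h j - m)
        = (∑ j, (p j * h j - q j * h j)) - m * ∑ j, (p j - q j) := by
      rw [Finset.mul_sum, ← Finset.sum_sub_distrib]
      apply Finset.sum_congr rfl; intros; ring
    rw [e, hsum0, Finset.sum_sub_distrib]; ring
  set t := ∑ j ∈ S, (p j - q j) with htdef
  have ht0 : 0 ≤ t := by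
    apply Finset.sum_nonneg
    intro j hj
    have := (Finset.mem_filter.mp hj).2
    linarith
  have hsplit : ∀ f : J → ℝ, ∑ j, f j = (∑ j ∈ S, f j) + ∑ j ∈ Sᶜ, f j := by
    intro f
    rw [← Finset.sum_add_sum_compl S f]
  have htc : -t = ∑ j ∈ Sᶜ, (p j - q j) := by
    have := hsplit (fun j => p j - q j)
    rw [hsum0] at this
    linarith
  have ht1 : t ≤ 1 - 1 / C := by
    have hq_ge : ∀ j, p j / C ≤ q j := by
      intro j
      rw [div_le_iff₀ hC0, mul_comm]
      exact hdom j
    have h1 : t ≤ ∑ j ∈ S, (p j - p j / C) := by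
      apply Finset.sum_le_sum
      intro j _
      have := hq_ge j
      linarith
    have h2 : ∑ j ∈ S, (p j - p j / C) = (1 - 1/C) * ∑ j ∈ S, p j := by
      rw [Finset.mul_sum]
      apply Finset.sum_congr rfl
      intros; ring
    have h3 : ∑ j ∈ S, p j ≤ 1 := by
      rw [← hp1]
      exact Finset.sum_le_sum_of_subset_of_nonneg (Finset.subset_univ S)
        (fun j _ _ => hp j)
    calc t ≤ (1 - 1/C) * ∑ j ∈ S, p j := by rw [← h2]; exact h1
      _ ≤ (1 - 1/C) * 1 := by
          exact mul_le_mul_of_nonneg_left h3 hCinv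
      _ = 1 - 1/C := by ring
  -- bounds on the sum
  have hub : ∑ j, (p j - q j) * (h j - m) ≤ t * (M - m) := by
    rw [hsplit]
    have h1 : ∑ j ∈ S, (p j - q j) * (h j - m) ≤ ∑ j ∈ S, (p j - q j) * (M - m) := by
      apply Finset.sum_le_sum
      intro j hj
      have hqp := (Finset.mem_filter.mp hj).2
      have := (hh j).2
      nlinarith
    have h2 : ∑ j ∈ Sᶜ, (p j - q j) * (h j - m) ≤ 0 := by
      apply Finset.sum_nonpos
      intro j hj
      have hqp : ¬ q j < p j := by
        have := Finset.mem_compl.mp hj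
        simpa [hSdef] using this
      have := (hh j).1
      nlinarith [not_lt.mp hqp]
    have h3 : ∑ j ∈ S, (p j - q j) * (M - m) = t * (M - m) := by
      rw [htdef, Finset.sum_mul]
    linarith
  have hlb : -(t * (M - m)) ≤ ∑ j, (p j - q j) * (h j - m) := by
    rw [hsplit]
    have h1 : (0:ℝ) ≤ ∑ j ∈ S, (p j - q j) * (h j - m) := by
      apply Finset.sum_nonneg
      intro j hj
      have hqp := (Finset.mem_filter.mp hj).2
      have := (hh j).1
      nlinarith
    have h2 : ∑ j ∈ Sᶜ, (p j - q j) * (M - m) ≤ ∑ j ∈ Sᶜ, (p j - q j) * (h j - m) := by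
      apply Finset.sum_le_sum
      intro j hj
      have hqp : ¬ q j < p j := by
        have := Finset.mem_compl.mp hj
        simpa [hSdef] using this
      have := (hh j).2
      nlinarith [not_lt.mp hqp]
    have h3 : ∑ j ∈ Sᶜ, (p j - q j) * (M - m) = -(t * (M - m)) := by
      rw [← Finset.sum_mul, ← htc]; ring
    linarith
  rw [hdiff, abs_le]
  constructor
  · have : t * (M - m) ≤ (1 - 1/C) * (M - m) :=
      mul_le_mul_of_nonneg_right ht1 (by linarith)
    linarith
  · have : t * (M - m) ≤ (1 - 1/C) * (M - m) :=
      mul_le_mul_of_nonneg_right ht1 (by linarith)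
    linarith
end
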